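/- (Gompertz form of the hazard.) Let f₀ > 0 and β > 0, and for L > t ≥ 0 define θ_rem(t, L) = ∫ₜ^L f₀ * exp(-β * s) ds. Then 1 / θ_rem(t, L) = (β / f₀) * exp(β * t) / (1 - exp(-β * (L - t))), and for each fixed t ≥ 0, 1 / θ_rem(t, L) converges to (β / f₀) * exp(β * t) as L → ∞; moreover (β / f₀) * exp(β * t) ≤ 1 / θ_rem(t, L) for every L > t. Hence the hazard has the Gompertz exponential form e^{β t} with rate β in the regime t ≪ L. -/

import Mathlib

/-! The remaining budget integrates in closed form to `(f₀ / β) e^{-βt} (1 - e^{-β(L-t)})`, so the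
hazard is the Gompertz term `(β / f₀) e^{βt}` divided by a factor that lies in `(0, 1]` and tends
to `1` as `L → ∞`. -/

open intervalIntegral Filter Real

theorem integral_const_mul_exp_neg_mul (c : ℝ) {β : ℝ} (hβ : β ≠ 0) (a b : ℝ) :
    ∫ s in a..b, c * exp (-β * s) = c / β * (exp (-β * a) - exp (-β * b)) := by
  rw [integral_const_mul, integral_comp_mul_left (fun x => exp x) (neg_ne_zero.mpr hβ),
    integral_exp, smul_eq_mul]
  field_simp
  ring

theorem exp_neg_mul_sub_exp_neg_mul (β t L : ℝ) :
    exp (-β * t) - exp (-β * L) = exp (-β * t) * (1 - exp (-β * (L - t))) := by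
  rw [mul_one_sub, ← exp_add]
  ring_nf

theorem one_div_integral_const_mul_exp_neg_mul (c : ℝ) {β : ℝ} (hβ : β ≠ 0) (t L : ℝ) :
    1 / ∫ s in t..L, c * exp (-β * s) = β / c * exp (β * t) / (1 - exp (-β * (L - t))) := by
  rw [integral_const_mul_exp_neg_mul c hβ, exp_neg_mul_sub_exp_neg_mul, neg_mul, exp_neg]
  simp only [mul_inv, inv_inv, div_eq_mul_inv]
  ring

theorem one_sub_exp_neg_mul_sub_mem_Ioc {β t L : ℝ} (hβ : 0 < β) (htL : t < L) :
    1 - exp (-β * (L - t)) ∈ Set.Ioc 0 1 := by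
  have hneg : -β * (L - t) < 0 := mul_neg_of_neg_of_pos (neg_neg_of_pos hβ) (sub_pos.mpr htL)
  constructor
  · linarith [exp_lt_one_iff.mpr hneg]
  · linarith [exp_pos (-β * (L - t))]

theorem tendsto_div_one_sub_exp_neg_mul_sub_atTop (A : ℝ) {β : ℝ} (hβ : 0 < β) (t : ℝ) :
    Tendsto (fun L => A / (1 - exp (-β * (L - t)))) atTop (nhds A) := by
  have hexp : Tendsto (fun L => exp (-β * (L - t))) atTop (nhds 0) := by
    exact tendsto_exp_comp_nhds_zero.mpr <|
      (tendsto_atTop_add_const_right _ (-t) tendsto_id).const_mul_atTop_of_neg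
      (neg_neg_of_pos hβ)
  have hden : Tendsto (fun L => 1 - exp (-β * (L - t))) atTop (nhds 1) := by
    simpa only [sub_zero] using tendsto_const_nhds.sub hexp
  simpa only [Pi.div_def, div_one] using (tendsto_const_nhds (x := A)).div hden one_ne_zero

/-- Gompertz form of the hazard: for `θ_rem t L = ∫ₜ^L f₀ e^{-βs} ds`
one has `1 / θ_rem t L = (β / f₀) * e^{β t} / (1 - e^{-β (L - t)})`; for fixed
`t ≥ 0`, `1 / θ_rem t L → (β / f₀) * e^{β t}` as `L → ∞`, and
`(β / f₀) * e^{β t} ≤ 1 / θ_rem t L` for every `L > t`: the hazard has the Gompertz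
exponential form with rate `β` in the regime `t ≪ L`. -/
theorem gompertz_hazard
    (f₀ β : ℝ) (hf₀ : 0 < f₀) (hβ : 0 < β)
    (θrem : ℝ → ℝ → ℝ)
    (hθrem : ∀ t L : ℝ, θrem t L = ∫ s in t..L, f₀ * Real.exp (-β * s)) :
    ∀ t : ℝ, 0 ≤ t →
      (∀ L : ℝ, t < L →
        1 / θrem t L =
          (β / f₀) * Real.exp (β * t) / (1 - Real.exp (-β * (L - t)))) ∧
      Tendsto (fun L => 1 / θrem t L) atTop
        (nhds ((β / f₀) * Real.exp (β * t))) ∧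
      (∀ L : ℝ, t < L → (β / f₀) * Real.exp (β * t) ≤ 1 / θrem t L) := by
  intro t _
  have hazard : ∀ L, 1 / θrem t L = β / f₀ * exp (β * t) / (1 - exp (-β * (L - t))) := fun L => by
    rw [hθrem]
    exact one_div_integral_const_mul_exp_neg_mul f₀ hβ.ne' t L
  refine ⟨fun L _ => hazard L, ?_, fun L htL => ?_⟩
  · simpa only [hazard] using tendsto_div_one_sub_exp_neg_mul_sub_atTop _ hβ t
  · obtain ⟨hpos, hle⟩ := one_sub_exp_neg_mul_sub_mem_Ioc hβ htL
    rw [hazard]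
    exact le_div_self (by positivity) hpos hle
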